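/- For the TRW coframe and connection, the axial part of the torsion, A_a := (1/6) ε_{abcd} T^{bcd}, has squared magnitude η^{ab} A_a A_b = −4 W₂(t)² at every point of U. -/

import Mathlib

/-!
For a diagonal coframe, `∂_μ h^a_ν` vanishes unless `a = ν`, so the derivative part of the frame
torsion `T^a_{bc}` is supported on `a ∈ {b, c}`; so are the contributions of the `W₁` part and of the
Levi-Civita part (`χ`, `cos θ`) of the connection. Contracting with `ε` only sees pairwise distinct
`b, c, d`, and there the `W₂` part alone gives `T^a_{bc} = -2 W₂ ε_{0abc}`. Hence
`A = (-2 W₂, 0, 0, 0)`, whose Minkowski square is `-4 W₂²`. (Indices are 0-based: `x 0, …, x 3`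
are `t, r, θ, φ`, and `ε_{1234}` is `eps 0 1 2 3`.)
-/

open Real
open scoped ContDiff

noncomputable section

/-- Partial derivative in the μ-th coordinate direction. -/
def pd (μ : Fin 4) (f : (Fin 4 → ℝ) → ℝ) (x : Fin 4 → ℝ) : ℝ :=
  fderiv ℝ f x (Pi.single μ 1)

/-- The Minkowski metric η = diag(−1,1,1,1) on frame indices. -/
def eta : Matrix (Fin 4) (Fin 4) ℝ := Matrix.diagonal ![-1, 1, 1, 1]

/-- The TRW coframe h^a_μ = diag(1, a/χ, a r, a r sinθ), χ = √(1 − k r²);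
rows are frame indices a, columns are coordinate indices μ. -/
def hco (k : ℝ) (a : ℝ → ℝ) (x : Fin 4 → ℝ) : Matrix (Fin 4) (Fin 4) ℝ :=
  Matrix.diagonal
    ![1, a (x 0) / Real.sqrt (1 - k * (x 1) ^ 2),
      a (x 0) * (x 1), a (x 0) * (x 1) * Real.sin (x 2)]

/-- The inverse frame h_a^μ = diag(1, χ/a, 1/(a r), 1/(a r sinθ));
rows are frame indices a, columns are coordinate indices μ. -/
def hin (k : ℝ) (a : ℝ → ℝ) (x : Fin 4 → ℝ) : Matrix (Fin 4) (Fin 4) ℝ :=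
  Matrix.diagonal
    ![1, Real.sqrt (1 - k * (x 1) ^ 2) / a (x 0),
      1 / (a (x 0) * (x 1)), 1 / (a (x 0) * (x 1) * Real.sin (x 2))]

/-- The matrices ω_μ = (ω^a_{bμ}) of the TRW connection, obtained from the
antisymmetric one-forms ω_{12} = W₁(a/χ) dr, ω_{13} = W₁ a r dθ,
ω_{14} = W₁ a r sinθ dφ, ω_{23} = −χ dθ + W₂ a r sinθ dφ,
ω_{24} = −W₂ a r dθ − χ sinθ dφ, ω_{34} = W₂(a/χ) dr − cosθ dφ,
via ω^a_{bμ} = η^{ac} ω_{cbμ}. -/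
def omegaTRW (k : ℝ) (a W₁ W₂ : ℝ → ℝ) (μ : Fin 4) (x : Fin 4 → ℝ) :
    Matrix (Fin 4) (Fin 4) ℝ :=
  let t := x 0
  let r := x 1
  let θ := x 2
  let χ := Real.sqrt (1 - k * r ^ 2)
  ![(0 : Matrix (Fin 4) (Fin 4) ℝ),
    !![0, -(W₁ t * a t / χ), 0, 0;
       -(W₁ t * a t / χ), 0, 0, 0;
       0, 0, 0, W₂ t * a t / χ;
       0, 0, -(W₂ t * a t / χ), 0],
    !![0, 0, -(W₁ t * a t * r), 0;
       0, 0, -χ, -(W₂ t * a t * r);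
       -(W₁ t * a t * r), χ, 0, 0;
       0, W₂ t * a t * r, 0, 0],
    !![0, 0, 0, -(W₁ t * a t * r * Real.sin θ);
       0, 0, W₂ t * a t * r * Real.sin θ, -(χ * Real.sin θ);
       0, -(W₂ t * a t * r * Real.sin θ), 0, -Real.cos θ;
       -(W₁ t * a t * r * Real.sin θ), χ * Real.sin θ, Real.cos θ, 0]] μ

/-- Torsion tensor T^a_{μν} = ∂_μ h^a_ν − ∂_ν h^a_μ + ω^a_{bμ} h^b_ν − ω^a_{bν} h^b_μ. -/
def Tor (k : ℝ) (a W₁ W₂ : ℝ → ℝ) (x : Fin 4 → ℝ) (A μ ν : Fin 4) : ℝ :=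
  pd μ (fun y => hco k a y A ν) x - pd ν (fun y => hco k a y A μ) x
    + ∑ b, (omegaTRW k a W₁ W₂ μ x A b * hco k a x b ν
        - omegaTRW k a W₁ W₂ ν x A b * hco k a x b μ)

/-- Frame components of the torsion tensor: T^a_{bc} = T^a_{μν} h_b^μ h_c^ν. -/
def Tfr (k : ℝ) (a W₁ W₂ : ℝ → ℝ) (x : Fin 4 → ℝ) (A B C : Fin 4) : ℝ :=
  ∑ μ, ∑ ν, Tor k a W₁ W₂ x A μ ν * hin k a x B μ * hin k a x C ν

/-- The totally antisymmetric Levi-Civita symbol ε_{abcd} with ε_{1234} = 1,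
defined via permutation signs (as the determinant of the matrix whose rows are
the standard basis vectors e_a, e_b, e_c, e_d). -/
def eps (a b c d : Fin 4) : ℝ :=
  Matrix.det (Matrix.of fun i j => if ![a, b, c, d] i = j then (1 : ℝ) else 0)

/-- T^{bcd}: all frame indices raised with η. -/
def Tup (k : ℝ) (a W₁ W₂ : ℝ → ℝ) (x : Fin 4 → ℝ) (B C D : Fin 4) : ℝ :=
  ∑ C', ∑ D', eta C C' * eta D D' * Tfr k a W₁ W₂ x B C' D'

/-- Axial part of the torsion: A_a = (1/6) ε_{abcd} T^{bcd}. -/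
def Afr (k : ℝ) (a W₁ W₂ : ℝ → ℝ) (x : Fin 4 → ℝ) (A : Fin 4) : ℝ :=
  (1 / 6) * ∑ B, ∑ C, ∑ D, eps A B C D * Tup k a W₁ W₂ x B C D

open Finset Matrix

theorem det_selection_mul_det_vandermonde {R : Type*} [CommRing R] {n : ℕ} (v : Fin n → Fin n) :
    det (of fun i j => if v i = j then (1 : R) else 0) * det (vandermonde fun j : Fin n => (j : R))
      = det (vandermonde fun i => (v i : R)) := by
  rw [← det_mul]
  congr 1
  ext i j
  simp [mul_apply, vandermonde_apply]

/-- `ε` is a ratio of Vandermonde determinants; the denominator `∏_{i<j} (j - i)` is `12`. -/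
theorem eps_eq (a b c d : Fin 4) :
    eps a b c d = ((b : ℝ) - a) * ((c : ℝ) - a) * ((d : ℝ) - a) * ((c : ℝ) - b) * ((d : ℝ) - b)
      * ((d : ℝ) - c) / 12 := by
  have h := det_selection_mul_det_vandermonde (R := ℝ) ![a, b, c, d]
  have h0 : Ioi (0 : Fin 4) = {1, 2, 3} := by decide
  have h1 : Ioi (1 : Fin 4) = {2, 3} := by decide
  have h2 : Ioi (2 : Fin 4) = {3} := by decide
  have h3 : Ioi (3 : Fin 4) = ∅ := by decide
  simp [det_vandermonde, Fin.prod_univ_four, h0, h1, h2, h3] at h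
  rw [eps]
  linear_combination h / 12

theorem eps_eq_zero_of_not_distinct {a b c d : Fin 4} (h : ¬ (b ≠ c ∧ b ≠ d ∧ c ≠ d)) :
    eps a b c d = 0 := by
  simp only [not_and_or, not_not] at h
  rcases h with rfl | rfl | rfl <;> simp [eps_eq]

theorem sum_eta_mul_eta_mul (f : Fin 4 → Fin 4 → ℝ) (C D : Fin 4) :
    ∑ C', ∑ D', eta C C' * eta D D' * f C' D' = eta C C * eta D D * f C D := by
  simp [eta, diagonal_apply, ite_mul, mul_ite]

def axialPart (T : Fin 4 → Fin 4 → Fin 4 → ℝ) (A : Fin 4) : ℝ :=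
  (1 / 6) * ∑ B, ∑ C, ∑ D, eps A B C D * ∑ C', ∑ D', eta C C' * eta D D' * T B C' D'

theorem axialPart_eq_of_eq_on_distinct {T T' : Fin 4 → Fin 4 → Fin 4 → ℝ}
    (h : ∀ b c d, b ≠ c → b ≠ d → c ≠ d → T b c d = T' b c d) :
    axialPart T = axialPart T' := by
  ext A
  simp only [axialPart, sum_eta_mul_eta_mul]
  congr 1
  refine sum_congr rfl fun B _ => sum_congr rfl fun C _ => sum_congr rfl fun D _ => ?_
  by_cases hd : B ≠ C ∧ B ≠ D ∧ C ≠ D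
  · rw [h B C D hd.1 hd.2.1 hd.2.2]
  · simp [eps_eq_zero_of_not_distinct hd]

theorem axialPart_mul_eps_zero (s : ℝ) :
    axialPart (fun b c d => s * eps 0 b c d) = ![s, 0, 0, 0] := by
  ext A
  simp only [axialPart, sum_eta_mul_eta_mul]
  fin_cases A <;> simp [Fin.sum_univ_four, eps_eq, eta]
  ring

section TRW

variable (k : ℝ) (a W₁ W₂ : ℝ → ℝ) (x : Fin 4 → ℝ)

theorem pd_hco_of_ne {A ν : Fin 4} (h : A ≠ ν) (μ : Fin 4) :
    pd μ (fun y => hco k a y A ν) x = 0 := by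
  simp [pd, hco, diagonal_apply_ne _ h]

theorem Tor_of_ne {A B C : Fin 4} (hB : A ≠ B) (hC : A ≠ C) :
    Tor k a W₁ W₂ x A B C
      = omegaTRW k a W₁ W₂ B x A C * hco k a x C C - omegaTRW k a W₁ W₂ C x A B * hco k a x B B := by
  rw [Tor, pd_hco_of_ne k a x hC, pd_hco_of_ne k a x hB]
  simp [hco, diagonal_apply, mul_ite]

theorem Tfr_eq (A B C : Fin 4) :
    Tfr k a W₁ W₂ x A B C = Tor k a W₁ W₂ x A B C * hin k a x B B * hin k a x C C := by
  simp [Tfr, hin, diagonal_apply, mul_ite]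

variable {k a x}

theorem hco_mul_hin (ha : a (x 0) ≠ 0) (hr : x 1 ≠ 0) (hθ : sin (x 2) ≠ 0)
    (hk : 0 < 1 - k * x 1 ^ 2) (B : Fin 4) : hco k a x B B * hin k a x B B = 1 := by
  have hχ : √(1 - k * x 1 ^ 2) ≠ 0 := (sqrt_pos.2 hk).ne'
  fin_cases B <;> simp [hco, hin] <;> field_simp

theorem Tfr_of_ne (ha : a (x 0) ≠ 0) (hr : x 1 ≠ 0) (hθ : sin (x 2) ≠ 0)
    (hk : 0 < 1 - k * x 1 ^ 2) {A B C : Fin 4} (hAB : A ≠ B) (hAC : A ≠ C) :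
    Tfr k a W₁ W₂ x A B C
      = omegaTRW k a W₁ W₂ B x A C * hin k a x B B - omegaTRW k a W₁ W₂ C x A B * hin k a x C C := by
  rw [Tfr_eq, Tor_of_ne k a W₁ W₂ x hAB hAC]
  linear_combination omegaTRW k a W₁ W₂ B x A C * hin k a x B B * hco_mul_hin ha hr hθ hk C
    - omegaTRW k a W₁ W₂ C x A B * hin k a x C C * hco_mul_hin ha hr hθ hk B

theorem Tfr_of_distinct (ha : a (x 0) ≠ 0) (hr : x 1 ≠ 0) (hθ : sin (x 2) ≠ 0)
    (hk : 0 < 1 - k * x 1 ^ 2) {A B C : Fin 4} (hAB : A ≠ B) (hAC : A ≠ C) (hBC : B ≠ C) :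
    Tfr k a W₁ W₂ x A B C = -2 * W₂ (x 0) * eps 0 A B C := by
  have hχ : √(1 - k * x 1 ^ 2) ≠ 0 := (sqrt_pos.2 hk).ne'
  rw [Tfr_of_ne W₁ W₂ ha hr hθ hk hAB hAC]
  -- `generalize` stops `field_simp` from normalising under the square root, where `hχ` would no
  -- longer match.
  fin_cases A <;> fin_cases B <;> fin_cases C <;> simp at hAB hAC hBC ⊢ <;>
    simp [omegaTRW, eps_eq, hin] <;>
    generalize √(1 - k * x 1 ^ 2) = χ at hχ ⊢ <;> field_simp <;> ring

end TRW

theorem TRW_axial_torsion_magnitude_general (k : ℝ) (a W₁ W₂ : ℝ → ℝ)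
    (hapos : ∀ t, 0 < a t)
    (x : Fin 4 → ℝ) (hr : 0 < x 1) (hθ₁ : 0 < x 2) (hθ₂ : x 2 < Real.pi)
    (hk : 0 < 1 - k * (x 1) ^ 2) :
    ∑ A, ∑ B, eta A B * Afr k a W₁ W₂ x A * Afr k a W₁ W₂ x B
      = -4 * (W₂ (x 0)) ^ 2 := by
  have hθ : sin (x 2) ≠ 0 := (sin_pos_of_pos_of_lt_pi hθ₁ hθ₂).ne'
  have hA : Afr k a W₁ W₂ x = ![-2 * W₂ (x 0), 0, 0, 0] :=
    calc Afr k a W₁ W₂ x = axialPart (Tfr k a W₁ W₂ x) := rfl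
      _ = axialPart (fun b c d => -2 * W₂ (x 0) * eps 0 b c d) :=
        axialPart_eq_of_eq_on_distinct fun _ _ _ =>
          Tfr_of_distinct W₁ W₂ (hapos _).ne' hr.ne' hθ hk
      _ = ![-2 * W₂ (x 0), 0, 0, 0] := axialPart_mul_eps_zero _
  simp [hA, Fin.sum_univ_four, eta]
  ring

/-- The squared magnitude of the axial torsion of the TRW geometry:
η^{ab} A_a A_b = −4 W₂(t)². -/
theorem TRW_axial_torsion_magnitude (k : ℝ) (a W₁ W₂ : ℝ → ℝ)
    (ha : ContDiff ℝ ∞ a) (hapos : ∀ t, 0 < a t)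
    (hW₁ : ContDiff ℝ ∞ W₁) (hW₂ : ContDiff ℝ ∞ W₂)
    (x : Fin 4 → ℝ) (hr : 0 < x 1) (hθ₁ : 0 < x 2) (hθ₂ : x 2 < Real.pi)
    (hk : 0 < 1 - k * (x 1) ^ 2) :
    ∑ A, ∑ B, eta A B * Afr k a W₁ W₂ x A * Afr k a W₁ W₂ x B
      = -4 * (W₂ (x 0)) ^ 2 :=
  TRW_axial_torsion_magnitude_general k a W₁ W₂ hapos x hr hθ₁ hθ₂ hk

end
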